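/- arXiv:1811.08778 — 2 statements merged into one kernel-verified Lean document; each statement's English description precedes it below -/
import Mathlib

section
/- Let 1 ≤ r' ≤ r ≤ min(s, K) with s ≤ N. Then Σ_{s,r} is dense in Σ_{s,r'}: for every X ∈ Σ_{s,r'} ⊆ ℝ^{N×K} and every ε > 0, there exists X' ∈ Σ_{s,r} with ‖X − X'‖_F < ε, where ‖·‖_F is the Frobenius norm. -/
/-! Enlarge the row support of `X` to a set `S` of `s` rows, choose `r` of them paired injectively
with `r` columns, and let `E` be the 0/1 matrix with ones exactly at these `r` positions.
Then `X + t • E` is still supported on `S`, and its `r × r` submatrix at the chosen positions is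
`M + t • 1`, with `M` the corresponding submatrix of `X`. Its determinant is the characteristic
polynomial of `-M` evaluated at `t`, which is monic and so has finitely many roots: arbitrarily
small `t > 0` give rank at least `r`, while `‖X - (X + t • E)‖_F = t ‖E‖_F`. -/

open Matrix

noncomputable section

/-- The set of indices of nonzero rows of a matrix. -/
def rowSupport {N K : ℕ} (X : Matrix (Fin N) (Fin K) ℝ) : Set (Fin N) := {i | X i ≠ 0}

/-- `X` is `s`-row sparse: at most `s` of its rows are nonzero. -/
def RowSparse {N K : ℕ} (s : ℕ) (X : Matrix (Fin N) (Fin K) ℝ) : Prop :=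
  (rowSupport X).ncard ≤ s

/-- `‖X‖₀`: the number of nonzero rows of `X`. -/
def rowL0 {N K : ℕ} (X : Matrix (Fin N) (Fin K) ℝ) : ℕ := (rowSupport X).ncard

/-- `Σ_{s,r}`: matrices in `ℝ^{N×K}` that are `s`-row sparse and have rank at least `r`. -/
def SigmaSR {N K : ℕ} (s r : ℕ) : Set (Matrix (Fin N) (Fin K) ℝ) :=
  {X | RowSparse s X ∧ r ≤ X.rank}

/-- The Frobenius norm of a matrix. -/
def frobNorm {N K : ℕ} (X : Matrix (Fin N) (Fin K) ℝ) : ℝ :=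
  Real.sqrt (∑ i, ∑ j, (X i j) ^ 2)

namespace Matrix

variable {ι m n R : Type*}

theorem exists_mem_Ioo_det_add_smul_one_ne_zero [Fintype n] [DecidableEq n] [Field R]
    [LinearOrder R] [IsStrictOrderedRing R] (M : Matrix n n R) {δ : R} (hδ : 0 < δ) :
    ∃ t ∈ Set.Ioo 0 δ, (M + t • (1 : Matrix n n R)).det ≠ 0 := by
  have hroots : {t | (-M).charpoly.IsRoot t}.Finite :=
    Polynomial.finite_setOfPred_isRoot (charpoly_monic _).ne_zero
  obtain ⟨t, ht, hroot⟩ := ((Set.Ioo_infinite hδ).sdiff hroots).nonempty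
  refine ⟨t, ht, fun hdet => hroot ?_⟩
  rw [Set.mem_ofPred_eq, Polynomial.IsRoot, eval_charpoly, scalar_apply, ← smul_one_eq_diagonal,
    sub_neg_eq_add, add_comm, hdet]

theorem card_le_rank_of_det_submatrix_ne_zero [Fintype ι] [DecidableEq ι] [Fintype n] [Field R]
    (A : Matrix m n R) {f : ι → m} {g : ι → n} (h : (A.submatrix f g).det ≠ 0) :
    Fintype.card ι ≤ A.rank := by
  rw [← rank_of_isUnit _ ((isUnit_iff_isUnit_det _).mpr h.isUnit)]
  exact rank_submatrix_le A f g

open Classical in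
def partialIdentity [Zero R] [One R] (f : ι ↪ m) (g : ι ↪ n) : Matrix m n R :=
  of fun a b => if ∃ i, f i = a ∧ g i = b then 1 else 0

theorem partialIdentity_submatrix [DecidableEq ι] [Zero R] [One R] (f : ι ↪ m) (g : ι ↪ n) :
    (partialIdentity f g : Matrix m n R).submatrix f g = 1 := by
  ext i j
  simp [partialIdentity, one_apply]

end Matrix

section

variable {N K : ℕ}

theorem frobNorm_nonneg (X : Matrix (Fin N) (Fin K) ℝ) : 0 ≤ frobNorm X :=
  Real.sqrt_nonneg _

theorem frobNorm_smul (c : ℝ) (X : Matrix (Fin N) (Fin K) ℝ) :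
    frobNorm (c • X) = |c| * frobNorm X := by
  simp only [frobNorm, Matrix.smul_apply, smul_eq_mul, mul_pow, ← Finset.mul_sum]
  rw [Real.sqrt_mul (sq_nonneg c), Real.sqrt_sq_eq_abs]

theorem rowSupport_add_subset (X Y : Matrix (Fin N) (Fin K) ℝ) :
    rowSupport (X + Y) ⊆ rowSupport X ∪ rowSupport Y := by
  intro a ha
  by_contra h
  simp only [Set.mem_union, rowSupport, Set.mem_ofPred_eq, not_or, not_not] at h ha
  exact ha (show X a + Y a = 0 by rw [h.1, h.2, add_zero])

theorem rowSupport_smul_subset (c : ℝ) (X : Matrix (Fin N) (Fin K) ℝ) :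
    rowSupport (c • X) ⊆ rowSupport X := by
  intro a ha hXa
  exact ha (show c • X a = 0 by rw [hXa, smul_zero])

theorem rowSupport_partialIdentity_subset {ι : Type*} (f : ι ↪ Fin N) (g : ι ↪ Fin K) :
    rowSupport (partialIdentity f g) ⊆ Set.range f := by
  intro a ha
  by_contra hf
  refine ha (funext fun b => if_neg ?_)
  rintro ⟨i, rfl, -⟩
  exact hf ⟨i, rfl⟩

theorem rowSparse_of_rowSupport_subset {s : ℕ} {X : Matrix (Fin N) (Fin K) ℝ} (S : Finset (Fin N))
    (hS : S.card ≤ s) (hX : rowSupport X ⊆ S) : RowSparse s X :=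
  (Set.ncard_le_ncard hX S.finite_toSet).trans ((Set.ncard_coe_finset S).trans_le hS)

end

theorem statement_11_general {N K : ℕ} (s r r' : ℕ)
    (hrs : r ≤ s) (hrK : r ≤ K) (hsN : s ≤ N)
    (X : Matrix (Fin N) (Fin K) ℝ) (hX : X ∈ SigmaSR (N := N) (K := K) s r')
    (ε : ℝ) (hε : 0 < ε) :
    ∃ X' ∈ SigmaSR (N := N) (K := K) s r, frobNorm (X - X') < ε := by
  obtain ⟨S, hXS, -, hS⟩ := Finset.exists_subsuperset_card_eq (Finset.subset_univ _)
    ((Set.ncard_eq_toFinset_card (rowSupport X)).symm.trans_le hX.1) (by simpa using hsN)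
  let f : Fin r ↪ Fin N := (Fin.castLEEmb hrs).trans (S.orderEmbOfFin hS).toEmbedding
  let g : Fin r ↪ Fin K := Fin.castLEEmb hrK
  let E : Matrix (Fin N) (Fin K) ℝ := partialIdentity f g
  have hδ : 0 < ε / (frobNorm E + 1) := div_pos hε (by linarith [frobNorm_nonneg E])
  obtain ⟨t, ⟨ht0, htδ⟩, hdet⟩ := (X.submatrix f g).exists_mem_Ioo_det_add_smul_one_ne_zero hδ
  refine ⟨X + t • E, ⟨?_, ?_⟩, ?_⟩
  · refine rowSparse_of_rowSupport_subset S hS.le ((rowSupport_add_subset _ _).trans ?_)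
    refine Set.union_subset (fun a ha => hXS (by simpa using ha)) ?_
    calc rowSupport (t • E) ⊆ rowSupport E := rowSupport_smul_subset t E
      _ ⊆ Set.range f := rowSupport_partialIdentity_subset f g
      _ ⊆ S := Set.range_subset_iff.mpr fun i => S.orderEmbOfFin_mem hS _
  · have hsub : (X + t • E).submatrix f g = X.submatrix f g + t • 1 := by
      show X.submatrix f g + t • E.submatrix f g = _
      rw [partialIdentity_submatrix]
    rw [← hsub] at hdet
    simpa only [Fintype.card_fin] using (X + t • E).card_le_rank_of_det_submatrix_ne_zero hdet
  · calc frobNorm (X - (X + t • E)) = t * frobNorm E := by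
          rw [sub_add_cancel_left, ← neg_smul, frobNorm_smul, abs_neg, abs_of_pos ht0]
      _ < ε := by
        rw [lt_div_iff₀ (by linarith [frobNorm_nonneg E])] at htδ
        nlinarith [frobNorm_nonneg E]

/-- `Σ_{s,r}` is dense in `Σ_{s,r'}` for `r' ≤ r`. -/
theorem statement_11 {N K : ℕ} (s r r' : ℕ)
    (hr'1 : 1 ≤ r') (hr'r : r' ≤ r) (hrs : r ≤ s) (hrK : r ≤ K) (hsN : s ≤ N)
    (X : Matrix (Fin N) (Fin K) ℝ) (hX : X ∈ SigmaSR (N := N) (K := K) s r')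
    (ε : ℝ) (hε : 0 < ε) :
    ∃ X' ∈ SigmaSR (N := N) (K := K) s r, frobNorm (X - X') < ε :=
  statement_11_general s r r' hrs hrK hsN X hX ε hε
end
end

section
/- Let W ∈ ℝ^{N×s} have rank s and be s-row sparse (at most s nonzero rows). Then ‖W(WᵀW)^{-1/2}‖_{2,1} = s. -/
open Matrix

noncomputable section

/-- The `ℓ_{2,1}` norm of a matrix: the sum of the Euclidean norms of its rows. -/
def l21norm {N K : ℕ} (X : Matrix (Fin N) (Fin K) ℝ) : ℝ :=
  ∑ i, Real.sqrt (∑ j, (X i j) ^ 2)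

/-!
`U = W S⁻¹` has orthonormal columns, so `U Uᵀ` is an orthogonal projection: every row of `U`
has squared norm `t ≤ 1`, and these squared norms add up to `trace (Uᵀ U) = s`. Since
`t ≤ √t ≤ 1` on `[0, 1]`, we get `s ≤ ‖U‖_{2,1} ≤ ‖U‖₀ ≤ ‖W‖₀ ≤ s`.
-/

namespace Matrix

variable {m n : Type*} [Fintype m] [Fintype n] [DecidableEq n]

theorem transpose_mul_self_eq_one_of_mul_self_eq {W : Matrix m n ℝ} {S : Matrix n n ℝ}
    (hSsym : S.IsSymm) (hS : IsUnit S.det) (hSS : S * S = Wᵀ * W) :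
    (W * S⁻¹)ᵀ * (W * S⁻¹) = 1 := by
  have hSinvT : S⁻¹ᵀ = S⁻¹ := by rw [transpose_nonsing_inv, hSsym.eq]
  calc (W * S⁻¹)ᵀ * (W * S⁻¹) = S⁻¹ * (Wᵀ * W) * S⁻¹ := by
        rw [transpose_mul, hSinvT]; simp only [Matrix.mul_assoc]
    _ = (S⁻¹ * S) * (S * S⁻¹) := by rw [← hSS]; simp only [Matrix.mul_assoc]
    _ = 1 := by rw [nonsing_inv_mul S hS, mul_nonsing_inv S hS, one_mul]

variable {U : Matrix m n ℝ}

theorem sum_sq_row_le_one_of_transpose_mul_self_eq_one [DecidableEq m] (hU : Uᵀ * U = 1)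
    (i : m) : ∑ j, U i j ^ 2 ≤ 1 := by
  set P := U * Uᵀ
  have hPP : P * P = P := by
    calc P * P = U * (Uᵀ * U) * Uᵀ := by simp only [P, Matrix.mul_assoc]
      _ = P := by rw [hU, Matrix.mul_one]
  have hPii : P i i = ∑ j, U i j ^ 2 := by simp only [P, mul_apply, transpose_apply, sq]
  have hsq : P i i ^ 2 ≤ P i i := by
    calc P i i ^ 2 ≤ ∑ k, P i k ^ 2 :=
          Finset.single_le_sum (fun k _ => sq_nonneg (P i k)) (Finset.mem_univ i)
      _ = P i i := by
        conv_rhs => rw [← hPP]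
        simp only [mul_apply, sq, P, transpose_apply, mul_comm]
  have hnonneg : 0 ≤ P i i := hPii ▸ Finset.sum_nonneg fun j _ => sq_nonneg (U i j)
  rw [← hPii]
  nlinarith

theorem sum_sum_sq_eq_card_of_transpose_mul_self_eq_one (hU : Uᵀ * U = 1) :
    ∑ i, ∑ j, U i j ^ 2 = Fintype.card n := by
  calc ∑ i, ∑ j, U i j ^ 2 = (Uᵀ * U).trace := by
        simp only [trace, diag, mul_apply, transpose_apply, sq]
        exact Finset.sum_comm
    _ = Fintype.card n := by rw [hU, trace_one]

end Matrix

section RowNorms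

variable {N K : ℕ}

theorem rowL0_mul_le {L : ℕ} (A : Matrix (Fin N) (Fin K) ℝ) (B : Matrix (Fin K) (Fin L) ℝ) :
    rowL0 (A * B) ≤ rowL0 A := by
  refine Set.ncard_le_ncard (fun i hi hA => hi ?_) (Set.toFinite _)
  ext j
  simp [mul_apply, show A i = 0 from hA]

theorem l21norm_le_rowL0 {X : Matrix (Fin N) (Fin K) ℝ} (hX : ∀ i, ∑ j, X i j ^ 2 ≤ 1) :
    l21norm X ≤ rowL0 X := by
  classical
  have hsupp : rowSupport X = ↑(Finset.univ.filter fun i => X i ≠ 0) := by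
    ext i; simp [rowSupport]
  rw [rowL0, hsupp, Set.ncard_coe_finset, ← Finset.sum_boole]
  refine Finset.sum_le_sum fun i _ => ?_
  by_cases hi : X i = 0
  · simp [hi]
  · simpa [hi] using hX i

theorem sum_sum_sq_le_l21norm {X : Matrix (Fin N) (Fin K) ℝ} (hX : ∀ i, ∑ j, X i j ^ 2 ≤ 1) :
    ∑ i, ∑ j, X i j ^ 2 ≤ l21norm X := by
  refine Finset.sum_le_sum fun i _ => ?_
  have h0 : 0 ≤ ∑ j, X i j ^ 2 := Finset.sum_nonneg fun j _ => sq_nonneg _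
  exact Real.le_sqrt_of_sq_le (pow_le_of_le_one h0 (hX i) two_ne_zero)

end RowNorms

theorem statement_14_general {N s : ℕ} (W : Matrix (Fin N) (Fin s) ℝ)
    (hsp : RowSparse s W)
    (S : Matrix (Fin s) (Fin s) ℝ) (hSsym : S.IsSymm) (hSpd : S.PosDef)
    (hSS : S * S = Wᵀ * W) :
    l21norm (W * S⁻¹) = s := by
  have hU : (W * S⁻¹)ᵀ * (W * S⁻¹) = 1 := transpose_mul_self_eq_one_of_mul_self_eq hSsym
    ((isUnit_iff_isUnit_det S).mp hSpd.isUnit) hSS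
  have hrows := sum_sq_row_le_one_of_transpose_mul_self_eq_one hU
  refine le_antisymm ?_ ?_
  · calc l21norm (W * S⁻¹) ≤ rowL0 (W * S⁻¹) := l21norm_le_rowL0 hrows
      _ ≤ rowL0 W := by exact_mod_cast rowL0_mul_le W S⁻¹
      _ ≤ s := by exact_mod_cast hsp
  · calc (s : ℝ) = ∑ i, ∑ j, (W * S⁻¹) i j ^ 2 := by
          rw [sum_sum_sq_eq_card_of_transpose_mul_self_eq_one hU, Fintype.card_fin]
      _ ≤ l21norm (W * S⁻¹) := sum_sum_sq_le_l21norm hrows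

/-- If `W ∈ ℝ^{N×s}` has rank `s` and is `s`-row sparse, then the `ℓ_{2,1}` norm of its
orthogonal factor `W * S⁻¹` equals `s`, where `S` is the symmetric positive-definite
square root of `WᵀW`. -/
theorem statement_14 {N s : ℕ} (W : Matrix (Fin N) (Fin s) ℝ) (hrank : W.rank = s)
    (hsp : RowSparse s W)
    (S : Matrix (Fin s) (Fin s) ℝ) (hSsym : S.IsSymm) (hSpd : S.PosDef)
    (hSS : S * S = Wᵀ * W) :
    l21norm (W * S⁻¹) = s :=
  statement_14_general W hsp S hSsym hSpd hSS
end
end
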